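/- Let T : X ⇉ X* be a multivalued operator. The following are equivalent: (1) T is pseudomonotone; (2) S(T,K) ⊂ S(T^ρ,K) for all K ⊂ X; (3) M(T^ρ,K) ⊂ M(T,K) for all K ⊂ X. -/

import Mathlib

open NormedSpace

section PseudoDefs

variable {X : Type*} [NormedAddCommGroup X] [NormedSpace ℝ X]

/-- `(x,x*) ∼_p (y,y*)`: the pseudomonotone relation. -/
def PseudoRel (p q : X × StrongDual ℝ X) : Prop :=
  min (q.2 (p.1 - q.1)) (p.2 (q.1 - p.1)) < 0 ∨
    (q.2 (p.1 - q.1) = 0 ∧ p.2 (q.1 - p.1) = 0)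

/-- An operator (identified with its graph) is pseudomonotone if any two of its
elements are pseudomonotonically related. -/
def Pseudomonotone (T : Set (X × StrongDual ℝ X)) : Prop :=
  ∀ p ∈ T, ∀ q ∈ T, PseudoRel p q

/-- The pseudomonotone polar `T^ρ`. -/
def pPolar (T : Set (X × StrongDual ℝ X)) : Set (X × StrongDual ℝ X) :=
  {p | ∀ q ∈ T, PseudoRel p q}

/-- The monotone polar `T^μ`. -/
def mPolar (T : Set (X × StrongDual ℝ X)) : Set (X × StrongDual ℝ X) :=
  {p | ∀ q ∈ T, 0 ≤ (p.2 - q.2) (p.1 - q.1)}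

/-- A monotone operator. -/
def MonotoneOp (T : Set (X × StrongDual ℝ X)) : Prop :=
  ∀ p ∈ T, ∀ q ∈ T, 0 ≤ (p.2 - q.2) (p.1 - q.1)

/-- The image `T(x)` of an operator at a point. -/
def img (T : Set (X × StrongDual ℝ X)) (x : X) : Set (StrongDual ℝ X) :=
  {x' | (x, x') ∈ T}

/-- The domain of an operator. -/
def opDom (T : Set (X × StrongDual ℝ X)) : Set X :=
  {x | (img T x).Nonempty}

/-- The set of zeros `Z_T` of an operator. -/
def zeros (T : Set (X × StrongDual ℝ X)) : Set X :=
  {x | (x, (0 : StrongDual ℝ X)) ∈ T}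

/-- The strict conic hull `cone_∘(A)` of a subset of the dual. -/
def coneS (A : Set (StrongDual ℝ X)) : Set (StrongDual ℝ X) :=
  {v | ∃ t : ℝ, 0 < t ∧ ∃ a ∈ A, v = t • a}

/-- The conic hull `cone(A)` of a subset of the dual. -/
def coneH (A : Set (StrongDual ℝ X)) : Set (StrongDual ℝ X) :=
  {v | ∃ t : ℝ, 0 ≤ t ∧ ∃ a ∈ A, v = t • a}

/-- The operator `cone_∘(T)`, with `(cone_∘(T))(x) = cone_∘(T(x))`. -/
def coneOp (T : Set (X × StrongDual ℝ X)) : Set (X × StrongDual ℝ X) :=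
  {p | p.2 ∈ coneS (img T p.1)}

/-- The normal cone `N_C(x)`. -/
def normalCone (C : Set X) (x : X) : Set (StrongDual ℝ X) :=
  {x' | ∀ y ∈ C, x' (y - x) ≤ 0}

/-- The strict normal cone `N°_C(x)`. -/
def strictNormalCone (C : Set X) (x : X) : Set (StrongDual ℝ X) :=
  {x' | ∀ y ∈ C, x' (y - x) < 0}

/-- `V_T(x) = {y : ∃ y* ∈ T(y), ⟨x - y, y*⟩ > 0}`. -/
def Vset (T : Set (X × StrongDual ℝ X)) (x : X) : Set X :=
  {y | ∃ y' ∈ img T y, 0 < y' (x - y)}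

/-- `W_T(x) = {y : ∃ y* ∈ T(y), ⟨x - y, y*⟩ = 0}`. -/
def Wset (T : Set (X × StrongDual ℝ X)) (x : X) : Set X :=
  {y | ∃ y' ∈ img T y, y' (x - y) = 0}

/-- Maximal pseudomonotonicity. -/
def MaxPseudomonotone (T : Set (X × StrongDual ℝ X)) : Prop :=
  Pseudomonotone T ∧ ∀ S : Set (X × StrongDual ℝ X), T ⊆ S → Pseudomonotone S → T = S

/-- Pre-maximal pseudomonotonicity: both `T` and `T^ρ` are pseudomonotone. -/
def PreMaxPseudomonotone (T : Set (X × StrongDual ℝ X)) : Prop :=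
  Pseudomonotone T ∧ Pseudomonotone (pPolar T)

/-- The restriction `T|_A` of an operator to a set `A`. -/
def restrictOp (T : Set (X × StrongDual ℝ X)) (A : Set X) : Set (X × StrongDual ℝ X) :=
  {p ∈ T | p.1 ∈ A}

/-- `L(T,x) = {y : ∃ y* ∈ T(y), ⟨x - y, y*⟩ ≥ 0}`. -/
def Lset (T : Set (X × StrongDual ℝ X)) (x : X) : Set X :=
  {y | ∃ y' ∈ img T y, 0 ≤ y' (x - y)}

/-- The operator `T̂ `: `T̂(x) = N_{L(T,x)}(x)` on `Z_T`, `cone_∘(T(x))` on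
`dom(T) \ Z_T`, and `∅` outside `dom(T)`. -/
def hatOp (T : Set (X × StrongDual ℝ X)) : Set (X × StrongDual ℝ X) :=
  {p | (p.1 ∈ zeros T ∧ p.2 ∈ normalCone (Lset T p.1) p.1) ∨
       (p.1 ∈ opDom T ∧ p.1 ∉ zeros T ∧ p.2 ∈ coneS (img T p.1))}

/-- Two operators are equivalent: same domain, same zeros, and the same conic
hulls of images outside the set of zeros. -/
def EquivOp (T S : Set (X × StrongDual ℝ X)) : Prop :=
  opDom T = opDom S ∧ zeros T = zeros S ∧
    ∀ x ∈ opDom T \ zeros T, coneH (img T x) = coneH (img S x)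

/-- `D`-maximal pseudomonotonicity (Hadjisavvas): `T` is pseudomonotone and some
equivalent pseudomonotone operator has no proper pseudomonotone extension with
the same domain. -/
def DMaxPseudomonotone (T : Set (X × StrongDual ℝ X)) : Prop :=
  Pseudomonotone T ∧ ∃ S : Set (X × StrongDual ℝ X), EquivOp T S ∧ Pseudomonotone S ∧
    ∀ S' : Set (X × StrongDual ℝ X), S ⊆ S' → Pseudomonotone S' → opDom S' = opDom S → S' = S

/-- The solution set of the Stampacchia variational inequality problem. -/
def SVIsol (T : Set (X × StrongDual ℝ X)) (K : Set X) : Set X :=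
  {x ∈ K | ∃ x' ∈ img T x, ∀ y ∈ K, 0 ≤ x' (y - x)}

/-- The solution set of the Minty variational inequality problem. -/
def MVIsol (T : Set (X × StrongDual ℝ X)) (K : Set X) : Set X :=
  {x ∈ K | ∀ q ∈ T, q.1 ∈ K → q.2 (x - q.1) ≤ 0}

/-- The linear perturbation `T + α*`. -/
def pertOp (T : Set (X × StrongDual ℝ X)) (α : StrongDual ℝ X) : Set (X × StrongDual ℝ X) :=
  {p | ∃ q ∈ T, p = (q.1, q.2 + α)}

end PseudoDefs

/-! Pseudomonotonicity is Karamardian's condition `⟨y - x, x*⟩ ≥ 0 ⇒ ⟨x - y, y*⟩ ≤ 0`.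
Each inclusion of solution sets, tested on the two-point set `K = {x, y}`, yields exactly
this condition for a pair `(x, x*), (y, y*) ∈ T`, since `x` solves the Stampacchia problem
for `T` on `{x, y}` as soon as `⟨y - x, x*⟩ ≥ 0`. Conversely, pseudomonotonicity means
`T ⊆ T^ρ`, and `S(·, K)` is monotone while `M(·, K)` is antitone in the operator. -/

section PseudoVI

variable {X : Type*} [NormedAddCommGroup X] [NormedSpace ℝ X]

theorem pseudoRel_iff {p q : X × StrongDual ℝ X} :
    PseudoRel p q ↔ (0 ≤ p.2 (q.1 - p.1) → q.2 (p.1 - q.1) ≤ 0) ∧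
      (0 ≤ q.2 (p.1 - q.1) → p.2 (q.1 - p.1) ≤ 0) := by
  rw [PseudoRel, min_lt_iff]
  grind

theorem pseudomonotone_iff_subset_pPolar {T : Set (X × StrongDual ℝ X)} :
    Pseudomonotone T ↔ T ⊆ pPolar T :=
  Iff.rfl

theorem pseudomonotone_iff_nonpos {T : Set (X × StrongDual ℝ X)} :
    Pseudomonotone T ↔ ∀ p ∈ T, ∀ q ∈ T, 0 ≤ p.2 (q.1 - p.1) → q.2 (p.1 - q.1) ≤ 0 :=
  ⟨fun h p hp q hq => (pseudoRel_iff.1 (h p hp q hq)).1,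
    fun h p hp q hq => pseudoRel_iff.2 ⟨h p hp q hq, h q hq p hp⟩⟩

theorem SVIsol_mono {T S : Set (X × StrongDual ℝ X)} (hTS : T ⊆ S) (K : Set X) :
    SVIsol T K ⊆ SVIsol S K :=
  fun _ ⟨hxK, x', hx', hsol⟩ => ⟨hxK, x', hTS hx', hsol⟩

theorem MVIsol_anti {T S : Set (X × StrongDual ℝ X)} (hTS : T ⊆ S) (K : Set X) :
    MVIsol S K ⊆ MVIsol T K :=
  fun _ ⟨hxK, hsol⟩ => ⟨hxK, fun q hq => hsol q (hTS hq)⟩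

theorem mem_SVIsol_pair {T : Set (X × StrongDual ℝ X)} {x y : X} {x' : StrongDual ℝ X}
    (hx : (x, x') ∈ T) (hxy : 0 ≤ x' (y - x)) : x ∈ SVIsol T {x, y} := by
  refine ⟨Set.mem_insert x {y}, x', hx, ?_⟩
  rintro z (rfl | rfl)
  · simp
  · exact hxy

theorem mem_MVIsol_pPolar_pair {T : Set (X × StrongDual ℝ X)} {x y : X} {x' : StrongDual ℝ X}
    (hx : (x, x') ∈ T) (hxy : 0 ≤ x' (y - x)) : x ∈ MVIsol (pPolar T) {x, y} := by
  refine ⟨Set.mem_insert x {y}, fun u hu huK => ?_⟩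
  rcases huK with hux | huy
  · simp [hux]
  · exact (pseudoRel_iff.1 (hu _ hx)).2 (huy ▸ hxy)

end PseudoVI

theorem pseudomonotone_iff_vi_inclusions
    {X : Type*} [NormedAddCommGroup X] [NormedSpace ℝ X]
    (T : Set (X × StrongDual ℝ X)) :
    [Pseudomonotone T,
     ∀ K : Set X, SVIsol T K ⊆ SVIsol (pPolar T) K,
     ∀ K : Set X, MVIsol (pPolar T) K ⊆ MVIsol T K].TFAE := by
  tfae_have 1 → 2 := fun h => SVIsol_mono (pseudomonotone_iff_subset_pPolar.1 h)
  tfae_have 1 → 3 := fun h => MVIsol_anti (pseudomonotone_iff_subset_pPolar.1 h)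
  tfae_have 2 → 1 := by
    refine fun h => pseudomonotone_iff_nonpos.2 fun ⟨x, x'⟩ hp q hq hxy => ?_
    obtain ⟨-, z', hz', hz'y⟩ := h _ (mem_SVIsol_pair hp hxy)
    exact (pseudoRel_iff.1 (hz' _ hq)).1 (hz'y q.1 (by simp))
  tfae_have 3 → 1 := by
    refine fun h => pseudomonotone_iff_nonpos.2 fun ⟨x, x'⟩ hp q hq hxy => ?_
    exact (h _ (mem_MVIsol_pPolar_pair hp hxy)).2 _ hq (by simp)
  tfae_finish
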